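/- Fix n ≥ 1 and let L_{mod n} be the language over the two-letter alphabet {0, 1} denoted by the regular expression (0+1)^{<n} (1 (0+1)^{n−1})*, i.e., L_{mod n} = { u v_1 v_2 ⋯ v_r : r ∈ ℕ, u ∈ {0,1}* with |u| < n, and each v_s ∈ {0,1}* has length exactly n and begins with the symbol 1 }. Then a word w ∈ {0,1}* belongs to L_{mod n} if and only if for every m ≥ 1 with m·n ≤ |w|, the symbol of w at distance m·n from the end (i.e., the symbol at 0-based index |w| − m·n) equals 1. In other words, w ∈ L_{mod n} iff every position that is a multiple of n, counting from the end of w, contains a 1. -/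
import Mathlib

private lemma stmt5_fwd (n : ℕ) (hn : 1 ≤ n) (u : List Bool) (vs : List (List Bool))
    (hu : u.length < n) (hv : ∀ v ∈ vs, v.length = n ∧ v.head? = some true) :
    ∀ m : ℕ, 1 ≤ m → m * n ≤ (u ++ vs.flatten).length →
      (u ++ vs.flatten)[(u ++ vs.flatten).length - m * n]? = some true := by
  induction vs using List.reverseRecOn with
  | nil =>
    intro m hm hle
    simp only [List.flatten_nil, List.append_nil, List.length_nil] at *
    have : n ≤ m * n := Nat.le_mul_of_pos_left n hm
    omega
  | append_singleton vs v ih =>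
    have hvlen : v.length = n := (hv v (by simp)).1
    have hvhead : v.head? = some true := (hv v (by simp)).2
    intro m hm hle
    have heq : u ++ (vs ++ [v]).flatten = (u ++ vs.flatten) ++ v := by
      simp
    rw [heq] at hle ⊢
    set w' := u ++ vs.flatten with hw'
    have hlen : (w' ++ v).length = w'.length + n := by
      simp [hvlen]
    rw [hlen] at hle ⊢
    rcases eq_or_lt_of_le hm with h1 | h2
    · -- m = 1
      have hm1 : m = 1 := h1.symm
      subst hm1
      have hidx : w'.length + n - 1 * n = w'.length := by omega
      rw [hidx, List.getElem?_append_right (le_refl _)]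
      simp only [Nat.sub_self]
      rw [← List.head?_eq_getElem?]
      exact hvhead
    · -- m ≥ 2
      have hmul : m * n = (m - 1) * n + n := by
        rw [Nat.sub_one_mul]
        have : n ≤ m * n := Nat.le_mul_of_pos_left n (by omega)
        omega
      have hle' : (m - 1) * n ≤ w'.length := by omega
      have hpos : 1 ≤ (m - 1) * n := by
        have : n ≤ (m - 1) * n := Nat.le_mul_of_pos_left n (by omega)
        omega
      have hidx : w'.length + n - m * n = w'.length - (m - 1) * n := by omega
      rw [hidx, List.getElem?_append_left (by omega)]
      exact ih (fun x hx => hv x (by simp [hx])) (m - 1) (by omega) hle'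

private lemma stmt5_bwd (n : ℕ) (hn : 1 ≤ n) :
    ∀ (N : ℕ) (w : List Bool), w.length ≤ N →
      (∀ m : ℕ, 1 ≤ m → m * n ≤ w.length → w[w.length - m * n]? = some true) →
      ∃ (u : List Bool) (vs : List (List Bool)),
        u.length < n ∧ (∀ v ∈ vs, v.length = n ∧ v.head? = some true) ∧
        w = u ++ vs.flatten := by
  intro N
  induction N with
  | zero =>
    intro w hw _
    exact ⟨w, [], by omega, by simp, by simp⟩
  | succ N IH =>
    intro w hw h
    by_cases hlt : w.length < n
    · exact ⟨w, [], hlt, by simp, by simp⟩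
    · push_neg at hlt
      set k := w.length - n with hk
      set w' := w.take k with hw'
      set v := w.drop k with hv
      have hwsplit : w = w' ++ v := (List.take_append_drop k w).symm
      have hvlen : v.length = n := by
        simp [hv, hk]; omega
      have hw'len : w'.length = k := by
        simp [hw', hk]
      have hvhead : v.head? = some true := by
        rw [List.head?_eq_getElem?, hv, List.getElem?_drop]
        have := h 1 le_rfl (by omega)
        simpa [hk] using this
      have h' : ∀ m : ℕ, 1 ≤ m → m * n ≤ w'.length →
          w'[w'.length - m * n]? = some true := by
        intro m hm hle
        have hmul : (m + 1) * n = m * n + n := by ring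
        have hle2 : (m + 1) * n ≤ w.length := by
          rw [hw'len] at hle; omega
        have := h (m + 1) (by omega) hle2
        have hidx : w.length - (m + 1) * n = w'.length - m * n := by
          rw [hw'len]; omega
        rw [hidx] at this
        have hlt2 : w'.length - m * n < w'.length := by
          have : n ≤ m * n := Nat.le_mul_of_pos_left n hm
          omega
        rw [hwsplit, List.getElem?_append_left hlt2] at this
        exact this
      obtain ⟨u, vs, hu, hvs, heq⟩ := IH w' (by rw [hw'len]; omega) h'
      refine ⟨u, vs ++ [v], hu, ?_, ?_⟩
      · intro x hx
        rcases List.mem_append.mp hx with hx | hx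
        · exact hvs x hx
        · simp at hx; subst hx; exact ⟨hvlen, hvhead⟩
      · rw [hwsplit, heq]; simp

/-- Fix `n ≥ 1` and consider the language over `{0, 1}` (encoded as `Bool`, with `true`
standing for the symbol `1` and `false` for `0`) given by the regular expression
`(0+1)^{<n} (1 (0+1)^{n−1})*`, i.e. words `u v₁ v₂ ⋯ v_r` where `|u| < n` and each `v_s`
has length exactly `n` and begins with `1`.  A word `w` belongs to this language if and
only if for every `m ≥ 1` with `m·n ≤ |w|`, the symbol of `w` at 0-based index
`|w| − m·n` (i.e. at distance `m·n` from the end) is `1`. -/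
theorem stmt_5 (n : ℕ) (hn : 1 ≤ n) (w : List Bool) :
    (∃ (u : List Bool) (vs : List (List Bool)),
        u.length < n ∧ (∀ v ∈ vs, v.length = n ∧ v.head? = some true) ∧
        w = u ++ vs.flatten) ↔
      (∀ m : ℕ, 1 ≤ m → m * n ≤ w.length → w[w.length - m * n]? = some true) := by
  constructor
  · rintro ⟨u, vs, hu, hv, rfl⟩
    exact stmt5_fwd n hn u vs hu hv
  · exact stmt5_bwd n hn w.length w le_rfl
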